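/- Let V be the vector field on the bounded measurable functions M := B(ℝ, [0,1]) (with sup metric) defined by V(f)(x) := G((K∗f)(x)) if 0 < f(x) < 1, V(f)(x) := max(G((K∗f)(x)), 0) if f(x) = 0, and V(f)(x) := min(G((K∗f)(x)), 0) if f(x) = 1, where G is continuous with G(0) = -1 and K ∈ L¹ with K ≥ 0. Then V is not continuous at the constant zero function: there exists ε₀ > 0 (e.g. ε₀ = 1/2) such that for every δ > 0 there is g ∈ M with ‖g - 0‖_∞ < δ but ‖V(g) - V(0)‖_∞ ≥ ε₀. -/
import Mathlib


open MeasureTheory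

noncomputable def conv (K f : ℝ → ℝ) (x : ℝ) : ℝ := ∫ y, K (x - y) * f y

/-- The Lenia vector field obtained from the integro-differential equation. -/
noncomputable def leniaV (G K : ℝ → ℝ) (f : ℝ → ℝ) (x : ℝ) : ℝ :=
  if f x = 0 then max (G (conv K f x)) 0
  else if f x = 1 then min (G (conv K f x)) 0
  else G (conv K f x)

theorem leniaV_discontinuous_at_zero (G K : ℝ → ℝ)
    (hG : Continuous G) (hG0 : G 0 = -1)
    (hK : Integrable K) (hKpos : ∀ x, 0 ≤ K x) :
    ∃ ε₀ > (0:ℝ), ∀ δ > (0:ℝ), ∃ g : ℝ → ℝ, Measurable g ∧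
      (∀ x, g x ∈ Set.Icc (0:ℝ) 1) ∧
      (⨆ x, |g x - 0|) < δ ∧
      ε₀ ≤ ⨆ x, |leniaV G K g x - leniaV G K (fun _ => 0) x| := by
  refine ⟨1/2, by norm_num, fun δ hδ => ?_⟩
  -- continuity of G at 0
  obtain ⟨η, hη, hGη⟩ := Metric.continuous_iff.mp hG 0 (1/2) (by norm_num)
  set I := ∫ x, K x with hIdef
  have hI0 : 0 ≤ I := integral_nonneg hKpos
  set ε := min (min (δ/2) (1/2)) (η/(2*(I+1))) with hεdef
  have hεpos : 0 < ε := lt_min (lt_min (by linarith) (by norm_num)) (by positivity)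
  have hεδ : ε ≤ δ/2 := le_trans (min_le_left _ _) (min_le_left _ _)
  have hεhalf : ε ≤ 1/2 := le_trans (min_le_left _ _) (min_le_right _ _)
  have hεI : ε * I < η := by
    have h1 : ε ≤ η/(2*(I+1)) := min_le_right _ _
    have h2 : ε * I ≤ η/(2*(I+1)) * I := by
      apply mul_le_mul_of_nonneg_right h1 hI0
    have h3 : η/(2*(I+1)) * I < η := by
      rw [div_mul_eq_mul_div, div_lt_iff₀ (by positivity)]
      nlinarith
    linarith
  set g : ℝ → ℝ := Set.indicator (Set.Icc 0 1) (fun _ => ε) with hgdef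
  have hgmeas : Measurable g := measurable_const.indicator measurableSet_Icc
  have hgle : ∀ x, 0 ≤ g x ∧ g x ≤ ε := by
    intro x
    rw [hgdef]
    by_cases hx : x ∈ Set.Icc (0:ℝ) 1 <;>
      simp [Set.indicator_of_mem, Set.indicator_of_notMem, hx, hεpos.le]
  -- convolution bounds
  have hKx : ∀ x : ℝ, Integrable (fun y => K (x - y)) := fun x => hK.comp_sub_left x
  have hKgint : ∀ x : ℝ, Integrable (fun y => K (x - y) * g y) := by
    intro x
    refine Integrable.mono' ((hKx x).const_mul ε) ?_ ?_
    · exact (hKx x).aestronglyMeasurable.mul hgmeas.aestronglyMeasurable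
    · filter_upwards with y
      have h1 := hgle y
      have h2 := hKpos (x - y)
      rw [Real.norm_eq_abs, abs_of_nonneg (mul_nonneg h2 h1.1)]
      calc K (x - y) * g y ≤ K (x - y) * ε := mul_le_mul_of_nonneg_left h1.2 h2
        _ = ε * K (x - y) := mul_comm _ _
  have hconv_nonneg : ∀ x, 0 ≤ conv K g x := by
    intro x
    exact integral_nonneg fun y => mul_nonneg (hKpos _) (hgle y).1
  have hconv_le : ∀ x, conv K g x ≤ ε * I := by
    intro x
    have h1 : conv K g x ≤ ∫ y, ε * K (x - y) := by
      apply integral_mono (hKgint x) ((hKx x).const_mul ε)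
      intro y
      have h1 := hgle y
      have h2 := hKpos (x - y)
      calc K (x - y) * g y ≤ K (x - y) * ε := mul_le_mul_of_nonneg_left h1.2 h2
        _ = ε * K (x - y) := mul_comm _ _
    have h2 : (∫ y, ε * K (x - y)) = ε * I := by
      rw [integral_const_mul, integral_sub_left_eq_self K volume x]
    linarith
  -- leniaV of zero is zero
  have hV0 : ∀ x, leniaV G K (fun _ => 0) x = 0 := by
    intro x
    have hc : conv K (fun _ => 0) x = 0 := by simp [conv]
    simp [leniaV, hc, hG0]
  -- bound on |G| on the relevant compact set
  obtain ⟨M, hM⟩ := (isCompact_Icc (a := (0:ℝ)) (b := ε * I)).exists_bound_of_continuousOn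
    hG.continuousOn
  have hFbound : ∀ x, |leniaV G K g x - leniaV G K (fun _ => 0) x| ≤ M := by
    intro x
    rw [hV0 x, sub_zero]
    have hmem : conv K g x ∈ Set.Icc 0 (ε * I) := ⟨hconv_nonneg x, hconv_le x⟩
    have hGb : |G (conv K g x)| ≤ M := by
      have := hM _ hmem; rwa [Real.norm_eq_abs] at this
    unfold leniaV
    split_ifs with h1 h2
    · refine le_trans ?_ hGb
      rw [abs_le]
      constructor
      · exact le_trans (neg_abs_le _) (le_max_left _ _)
      · exact max_le (le_abs_self _) (abs_nonneg _)
    · refine le_trans ?_ hGb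
      rw [abs_le]
      constructor
      · exact le_min (neg_abs_le _) (neg_nonpos_of_nonneg (abs_nonneg _))
      · exact le_trans (min_le_left _ _) (le_abs_self _)
    · exact hGb
  have hbdd : BddAbove (Set.range fun x => |leniaV G K g x - leniaV G K (fun _ => 0) x|) :=
    ⟨M, by rintro _ ⟨x, rfl⟩; exact hFbound x⟩
  refine ⟨g, hgmeas, fun x => ⟨(hgle x).1, le_trans (hgle x).2 (by linarith)⟩, ?_, ?_⟩
  · have : (⨆ x, |g x - 0|) ≤ ε := by
      apply ciSup_le
      intro x
      rw [sub_zero, abs_of_nonneg (hgle x).1]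
      exact (hgle x).2
    linarith
  · -- witness point x₀ = 1/2
    have hx₀ : g (1/2 : ℝ) = ε := by
      rw [hgdef, Set.indicator_of_mem]
      constructor <;> norm_num
    have hne0 : g (1/2 : ℝ) ≠ 0 := by rw [hx₀]; exact ne_of_gt hεpos
    have hne1 : g (1/2 : ℝ) ≠ 1 := by rw [hx₀]; linarith
    have hVval : leniaV G K g (1/2) = G (conv K g (1/2)) := by
      unfold leniaV
      rw [if_neg hne0, if_neg hne1]
    have hclose : dist (conv K g (1/2)) 0 < η := by
      rw [Real.dist_eq, sub_zero, abs_of_nonneg (hconv_nonneg _)]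
      exact lt_of_le_of_lt (hconv_le _) hεI
    have hGclose := hGη _ hclose
    rw [hG0, Real.dist_eq] at hGclose
    have hGle : G (conv K g (1/2)) ≤ -(1/2) := by
      cases abs_lt.mp hGclose with
      | intro h1 h2 => linarith
    have hkey : (1/2 : ℝ) ≤ |leniaV G K g (1/2) - leniaV G K (fun _ => 0) (1/2)| := by
      rw [hV0, sub_zero, hVval, abs_of_nonpos (by linarith)]
      linarith
    exact le_trans hkey (le_ciSup hbdd (1/2 : ℝ))
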